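/- (N-barrier maximum principle for systems of three equations: upper bound.) Let d₁, d₂, d₃ > 0 and θ ∈ ℝ. Let ū > u̲ > 0, v̄ > v̲ > 0, w̄ > w̲ > 0, and let PH = {(u,v,w) ∈ ℝ³ : u,v,w ≥ 0, u/u̲ + v/v̲ + w/w̲ ≥ 1, u/ū + v/v̄ + w/w̄ ≤ 1}. Let f, g, h be continuous real-valued functions on [0,∞)³ satisfying: (i) the zero sets {f = 0}, {g = 0}, {h = 0} in the closed first octant are contained in PH; (ii) there exists δ > 0 such that f, g, h > 0 at every (u,v,w) with 0 < u,v,w < δ; (iii) there exists M > 0 such that f, g, h < 0 at every (u,v,w) with u,v,w > M. Suppose u, v, w : ℝ → ℝ are twice continuously differentiable functions, positive on ℝ, satisfying d₁u'' + θu' + u f(u,v,w) = 0, d₂v'' + θv' + v g(u,v,w) = 0, and d₃w'' + θw' + w h(u,v,w) = 0 on ℝ, and such that (u(x),v(x),w(x)) converges as x → −∞ to a point e₋ and as x → +∞ to a point e₊, where each of e₋ and e₊ is one of: (0,0,0); a point (u₁,0,0) with u₁ > 0 and f(u₁,0,0) = 0; a point (0,v₂,0) with v₂ > 0 and g(0,v₂,0)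 = 0; a point (0,0,w₃) with w₃ > 0 and h(0,0,w₃) = 0; or a point (u*,v*,w*) with u*,v*,w* > 0 and f(u*,v*,w*) = g(u*,v*,w*) = h(u*,v*,w*) = 0. Then for every α, β, γ > 0 and every x ∈ ℝ, α·u(x) + β·v(x) + γ·w(x) ≤ max(α·ū, β·v̄, γ·w̄) · max(d₁,d₂,d₃)/min(d₁,d₂,d₃). -/

import Mathlib

/-!
Let `λ = max (α ū) (β v̄) (γ w̄)`, so that `α u + β v + γ w ≤ λ` on and below the plane
`u/ū + v/v̄ + w/w̄ = 1`, in particular at `e₋` and `e₊`, each of which is the origin or a zero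
of `f`, `g` or `h` in the first octant. Strictly above that plane `f`, `g`, `h` have no zeros
and are negative far out along the diagonal, hence negative; so on an interval `[a, b]` spent
above the plane each species is a strict subsolution, `dᵢ zᵢ'' + θ zᵢ' > 0`. The maximum
principle bounds `zᵢ` on `[a, b]` by the solution of `dᵢ ψ'' + θ ψ' = 0` with the same boundary
values, `(1 - ψᵢ) zᵢ(a) + ψᵢ zᵢ(b)` with an exponential weight `ψᵢ` of rate `θ / dᵢ`.
Bernoulli's inequality compares `ψᵢ` and `1 - ψᵢ` with the weight of rate `θ / max dⱼ` up to the
factor `max dⱼ / dᵢ`, so that one common weight serves all three species at the cost of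
`max dⱼ / min dⱼ`. The endpoints of `[a, b]` lie on the plane or so far out that the weighted
sum is within `ε` of its limit.
-/

open Filter Set Real Topology

theorem rpow_sub_rpow_le_mul_sub {p q M r : ℝ} (hp : 0 < p) (hpq : p ≤ q) (hqM : q ≤ M)
    (hr : 1 ≤ r) : q ^ r - p ^ r ≤ r * M ^ (r - 1) * (q - p) := by
  have hq : 0 < q := hp.trans_le hpq
  have bernoulli := one_add_mul_self_le_rpow_one_add
    (show -1 ≤ p / q - 1 by linarith [div_pos hp hq]) hr
  rw [add_sub_cancel, div_rpow hp.le hq.le, le_div_iff₀ (rpow_pos_of_pos hq r)] at bernoulli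
  have hqr : q ^ r = q ^ (r - 1) * q := by rw [rpow_sub_one hq.ne', div_mul_cancel₀ _ hq.ne']
  have hqM' : q ^ (r - 1) ≤ M ^ (r - 1) := rpow_le_rpow hq.le hqM (by linarith)
  have hexp : (1 + r * (p / q - 1)) * q ^ r = q ^ r - r * q ^ (r - 1) * (q - p) := by
    rw [hqr]; field_simp; ring
  calc q ^ r - p ^ r ≤ r * q ^ (r - 1) * (q - p) := by linarith
    _ ≤ r * M ^ (r - 1) * (q - p) :=
      mul_le_mul_of_nonneg_right (mul_le_mul_of_nonneg_left hqM' (by linarith)) (sub_nonneg.2 hpq)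

theorem rpow_sub_one_mul_sub_le {p q r : ℝ} (hp : 0 < p) (hpq : p ≤ q) (hr : 1 ≤ r) :
    q ^ (r - 1) * (q - p) ≤ q ^ r - p ^ r := by
  have hq : 0 < q := hp.trans_le hpq
  have hmono : p ^ (r - 1) ≤ q ^ (r - 1) := rpow_le_rpow hp.le hpq (by linarith)
  have hsplit : ∀ {y : ℝ}, 0 < y → y ^ r = y ^ (r - 1) * y := fun hy => by
    rw [rpow_sub_one hy.ne', div_mul_cancel₀ _ hy.ne']
  rw [hsplit hq, hsplit hp]
  nlinarith [mul_le_mul_of_nonneg_right hmono hp.le]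

theorem rpow_sub_div_rpow_sub_le {A B X r : ℝ} (hA : 0 < A) (hB : 0 < B) (hAB : A ≠ B)
    (hX : X ∈ uIcc A B) (hr : 1 ≤ r) :
    (A ^ r - X ^ r) / (A ^ r - B ^ r) ≤ r * ((A - X) / (A - B)) := by
  have key : ∀ {N D n d c : ℝ}, N ≤ r * c * n → c * d ≤ D → 0 < c → 0 < d → 0 ≤ n →
      N / D ≤ r * (n / d) := by
    intro N D n d c hN hD hc hd hn
    rw [div_le_iff₀ ((mul_pos hc hd).trans_le hD)]
    calc N ≤ r * c * n := hN
      _ = r * (n / d) * (c * d) := by field_simp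
      _ ≤ r * (n / d) * D := by gcongr
  rcases hAB.lt_or_gt with hlt | hgt
  · rw [uIcc_of_le hlt.le] at hX
    rw [← neg_div_neg_eq, neg_sub, neg_sub, ← neg_div_neg_eq (A - X), neg_sub, neg_sub]
    exact key (rpow_sub_rpow_le_mul_sub hA hX.1 hX.2 hr) (rpow_sub_one_mul_sub_le hA hlt.le hr)
      (rpow_pos_of_pos hB _) (sub_pos.2 hlt) (sub_nonneg.2 hX.1)
  · rw [uIcc_of_ge hgt.le] at hX
    exact key (rpow_sub_rpow_le_mul_sub (hB.trans_le hX.1) hX.2 le_rfl hr)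
      (rpow_sub_one_mul_sub_le hB hgt.le hr) (rpow_pos_of_pos hA _) (sub_pos.2 hgt)
      (sub_nonneg.2 hX.2)

noncomputable def expPrimitive (k y : ℝ) : ℝ := if k = 0 then y else (1 - exp (-k * y)) / k

/-- The solution of `ψ'' + k ψ' = 0` with `ψ a = 0` and `ψ b = 1`. -/
noncomputable def harmonicWeight (k a b x : ℝ) : ℝ :=
  (expPrimitive k x - expPrimitive k a) / (expPrimitive k b - expPrimitive k a)

theorem hasDerivAt_expPrimitive (k y : ℝ) : HasDerivAt (expPrimitive k) (exp (-k * y)) y := by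
  rcases eq_or_ne k 0 with rfl | hk
  · have hfun : expPrimitive 0 = id := funext fun y => if_pos rfl
    simpa [hfun] using hasDerivAt_id y
  · have hfun : expPrimitive k = fun y => (1 - exp (-k * y)) / k := funext fun y => if_neg hk
    rw [hfun]
    exact ((((hasDerivAt_id' y).const_mul (-k)).exp.const_sub 1).div_const k).congr_deriv
      (by field_simp)

theorem expPrimitive_strictMono (k : ℝ) : StrictMono (expPrimitive k) :=
  strictMono_of_deriv_pos fun y => (hasDerivAt_expPrimitive k y).deriv ▸ exp_pos _

theorem continuous_expPrimitive (k : ℝ) : Continuous (expPrimitive k) :=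
  continuous_iff_continuousAt.2 fun y => (hasDerivAt_expPrimitive k y).continuousAt

theorem harmonicWeight_nonneg {k a b x : ℝ} (hx : x ∈ uIcc a b) :
    0 ≤ harmonicWeight k a b x := by
  have hW := (expPrimitive_strictMono k).monotone.mapsTo_uIcc hx
  rcases le_total (expPrimitive k a) (expPrimitive k b) with hle | hge
  · rw [uIcc_of_le hle] at hW
    exact div_nonneg (sub_nonneg.2 hW.1) (sub_nonneg.2 hle)
  · rw [uIcc_of_ge hge] at hW
    exact div_nonneg_of_nonpos (sub_nonpos.2 hW.2) (sub_nonpos.2 hge)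

theorem one_sub_harmonicWeight {k a b : ℝ} (hab : a ≠ b) (x : ℝ) :
    1 - harmonicWeight k a b x = harmonicWeight k b a x := by
  have hW : expPrimitive k b - expPrimitive k a ≠ 0 :=
    sub_ne_zero.2 ((expPrimitive_strictMono k).injective.ne hab.symm)
  have hW' : expPrimitive k a - expPrimitive k b ≠ 0 := fun h => hW (by linarith)
  unfold harmonicWeight
  field_simp
  ring

theorem harmonicWeight_of_ne_zero {k : ℝ} (hk : k ≠ 0) (a b x : ℝ) :
    harmonicWeight k a b x = (exp (-k * a) - exp (-k * x)) / (exp (-k * a) - exp (-k * b)) := by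
  simp only [harmonicWeight, expPrimitive, if_neg hk, ← sub_div]
  rw [div_div_div_cancel_right₀ hk]
  ring_nf

theorem harmonicWeight_mul_le {r k a b x : ℝ} (hr : 1 ≤ r) (hab : a ≠ b) (hx : x ∈ uIcc a b) :
    harmonicWeight (r * k) a b x ≤ r * harmonicWeight k a b x := by
  rcases eq_or_ne k 0 with rfl | hk
  · rw [mul_zero]
    exact le_mul_of_one_le_left (harmonicWeight_nonneg hx) hr
  have hrk : r * k ≠ 0 := mul_ne_zero (by linarith) hk
  have hpow : ∀ y, exp (-(r * k) * y) = exp (-k * y) ^ r := fun y => by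
    rw [← exp_mul]; ring_nf
  rw [harmonicWeight_of_ne_zero hk, harmonicWeight_of_ne_zero hrk, hpow, hpow, hpow]
  have hmono : Monotone (fun y => exp (-k * y)) ∨ Antitone (fun y => exp (-k * y)) := by
    rcases hk.lt_or_gt with hneg | hpos
    · exact Or.inl fun y z hyz => exp_le_exp.2 (by nlinarith)
    · exact Or.inr fun y z hyz => exp_le_exp.2 (by nlinarith)
  refine rpow_sub_div_rpow_sub_le (exp_pos _) (exp_pos _) ?_ ?_ hr
  · exact fun h => hab (mul_left_cancel₀ (neg_ne_zero.2 hk) (exp_injective h))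
  · rcases hmono with h | h
    exacts [h.mapsTo_uIcc hx, h.mapsTo_uIcc hx]

theorem nonpos_of_deriv_deriv_add_mul_deriv_pos {g : ℝ → ℝ} {k a b x : ℝ}
    (hg : ContinuousOn g (Icc a b))
    (hL : ∀ y ∈ Ioo a b, 0 < deriv (deriv g) y + k * deriv g y)
    (ha : g a ≤ 0) (hb : g b ≤ 0) (hx : x ∈ Icc a b) : g x ≤ 0 := by
  by_contra! hgx
  obtain ⟨c, hc, hmax⟩ := isCompact_Icc.exists_isMaxOn ⟨x, hx⟩ hg
  have hgc : 0 < g c := hgx.trans_le (hmax hx)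
  have hc' : c ∈ Ioo a b :=
    ⟨hc.1.lt_of_ne (by rintro rfl; linarith), hc.2.lt_of_ne (by rintro rfl; linarith)⟩
  have hnhds : Icc a b ∈ 𝓝 c := Icc_mem_nhds hc'.1 hc'.2
  have hlocmax : IsLocalMax g c := hmax.isLocalMax hnhds
  have hg' : deriv g c = 0 := hlocmax.deriv_eq_zero
  have hg'' : 0 < deriv (deriv g) c := by simpa [hg'] using hL c hc'
  -- By the second-derivative test `c` is also a local minimum, so `g` is constant near `c`.
  have hlocmin : IsLocalMin g c :=
    isLocalMin_of_deriv_deriv_pos hg'' hg' (hg.continuousAt hnhds)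
  have hconst : g =ᶠ[𝓝 c] fun _ => g c :=
    (hlocmin.and hlocmax).mono fun y hy => le_antisymm hy.2 hy.1
  have hflat : deriv (deriv g) c = 0 := by
    rw [hconst.deriv.deriv_eq]
    simp
  linarith

theorem le_interpolation_of_deriv_deriv_add_mul_deriv_pos {u : ℝ → ℝ} {k a b x : ℝ}
    (hu : ContDiff ℝ 2 u) (hab : a < b)
    (hL : ∀ y ∈ Ioo a b, 0 < deriv (deriv u) y + k * deriv u y) (hx : x ∈ Icc a b) :
    u x ≤ (1 - harmonicWeight k a b x) * u a + harmonicWeight k a b x * u b := by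
  set W := expPrimitive k
  have hWab : W b - W a ≠ 0 := sub_ne_zero.2 ((expPrimitive_strictMono k).injective.ne hab.ne')
  set Δ := (u b - u a) / (W b - W a)
  have hinterp : ∀ y, (1 - harmonicWeight k a b y) * u a + harmonicWeight k a b y * u b
      = u a + Δ * (W y - W a) := fun y => by
    simp only [harmonicWeight, Δ, W]
    field_simp
    ring
  have hu1 : Differentiable ℝ u := hu.differentiable (by norm_num)
  have hu2 : Differentiable ℝ (deriv u) :=
    (contDiff_succ_iff_deriv (n := 1).mp hu).2.2.differentiable one_ne_zero
  set g := fun y => u y - (u a + Δ * (W y - W a))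
  have hg' : deriv g = fun y => deriv u y - Δ * exp (-k * y) := funext fun y =>
    ((hu1 y).hasDerivAt.sub
      ((((hasDerivAt_expPrimitive k y).sub_const (W a)).const_mul Δ).const_add (u a))).deriv
  have hg'' : ∀ y, deriv (deriv g) y = deriv (deriv u) y + Δ * k * exp (-k * y) := fun y => by
    rw [hg']
    refine ((hu2 y).hasDerivAt.sub
      (((hasDerivAt_id' y).const_mul (-k)).exp.const_mul Δ)).deriv.trans ?_
    ring
  have hgx := nonpos_of_deriv_deriv_add_mul_deriv_pos (g := g) (k := k)
    ((hu1.continuous.sub (continuous_const.add (continuous_const.mul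
      ((continuous_expPrimitive k).sub continuous_const)))).continuousOn)
    (fun y hy => by rw [hg'', hg']; linarith [hL y hy]) (by simp [g]) (by simp [g, Δ, hWab]) hx
  rw [hinterp]
  linarith [hgx]

theorem le_mul_interpolation_of_subsolution {u : ℝ → ℝ} {d D θ a b x : ℝ}
    (hu : ContDiff ℝ 2 u) (hd : 0 < d) (hdD : d ≤ D) (hab : a < b)
    (hL : ∀ y ∈ Ioo a b, 0 < d * deriv (deriv u) y + θ * deriv u y) (hx : x ∈ Icc a b)
    (ha : 0 ≤ u a) (hb : 0 ≤ u b) :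
    u x ≤ D / d * ((1 - harmonicWeight (θ / D) a b x) * u a
      + harmonicWeight (θ / D) a b x * u b) := by
  have hr : 1 ≤ D / d := (one_le_div hd).2 hdD
  have hk : θ / d = D / d * (θ / D) := by field_simp [(hd.trans_le hdD).ne']
  have hcmp := le_interpolation_of_deriv_deriv_add_mul_deriv_pos (k := θ / d) hu hab
    (fun y hy => by
      have := div_pos (hL y hy) hd
      rwa [add_div, mul_div_cancel_left₀ _ hd.ne', mul_div_right_comm] at this) hx
  have hx' : x ∈ uIcc a b := Icc_subset_uIcc hx
  have hle := harmonicWeight_mul_le (k := θ / D) hr hab.ne hx'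
  have hle' := harmonicWeight_mul_le (k := θ / D) hr hab.ne' (uIcc_comm a b ▸ hx')
  rw [← one_sub_harmonicWeight hab.ne, ← one_sub_harmonicWeight hab.ne] at hle'
  rw [hk] at hcmp
  calc u x ≤ _ := hcmp
    _ ≤ D / d * (1 - harmonicWeight (θ / D) a b x) * u a
          + D / d * harmonicWeight (θ / D) a b x * u b := by gcongr
    _ = _ := by ring

theorem weighted_sum_le_of_subsolutions {u v w : ℝ → ℝ} {d₁ d₂ d₃ θ α β γ a b x : ℝ}
    (hd₁ : 0 < d₁) (hd₂ : 0 < d₂) (hd₃ : 0 < d₃) (hα : 0 ≤ α) (hβ : 0 ≤ β) (hγ : 0 ≤ γ)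
    (hu : ContDiff ℝ 2 u) (hv : ContDiff ℝ 2 v) (hw : ContDiff ℝ 2 w)
    (hu₀ : ∀ y, 0 ≤ u y) (hv₀ : ∀ y, 0 ≤ v y) (hw₀ : ∀ y, 0 ≤ w y)
    (hab : a < b) (hx : x ∈ Icc a b)
    (hL : ∀ y ∈ Ioo a b, 0 < d₁ * deriv (deriv u) y + θ * deriv u y ∧
      0 < d₂ * deriv (deriv v) y + θ * deriv v y ∧ 0 < d₃ * deriv (deriv w) y + θ * deriv w y) :
    α * u x + β * v x + γ * w x ≤ max d₁ (max d₂ d₃) / min d₁ (min d₂ d₃) *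
      max (α * u a + β * v a + γ * w a) (α * u b + β * v b + γ * w b) := by
  set D := max d₁ (max d₂ d₃)
  set d := min d₁ (min d₂ d₃)
  set ψ := harmonicWeight (θ / D) a b x
  have hψ₀ : 0 ≤ ψ := harmonicWeight_nonneg (Icc_subset_uIcc hx)
  have hψ₁ : 0 ≤ 1 - ψ := one_sub_harmonicWeight hab.ne x ▸
    harmonicWeight_nonneg (Icc_subset_uIcc' hx)
  have hd : 0 < d := lt_min hd₁ (lt_min hd₂ hd₃)
  have species : ∀ {z : ℝ → ℝ} {dz : ℝ}, d ≤ dz → dz ≤ D → ContDiff ℝ 2 z →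
      (∀ y, 0 ≤ z y) → (∀ y ∈ Ioo a b, 0 < dz * deriv (deriv z) y + θ * deriv z y) →
      z x ≤ D / d * ((1 - ψ) * z a + ψ * z b) := fun hdz hzD hz hz₀ hzL =>
    (le_mul_interpolation_of_subsolution hz (hd.trans_le hdz) hzD hab hzL hx (hz₀ a)
      (hz₀ b)).trans
      (by gcongr; exact add_nonneg (mul_nonneg hψ₁ (hz₀ a)) (mul_nonneg hψ₀ (hz₀ b)))
  have hu' := species (min_le_left _ _) (le_max_left _ _) hu hu₀ fun y hy => (hL y hy).1
  have hv' := species ((min_le_right _ _).trans (min_le_left _ _))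
    ((le_max_left _ _).trans (le_max_right _ _)) hv hv₀ fun y hy => (hL y hy).2.1
  have hw' := species ((min_le_right _ _).trans (min_le_right _ _))
    ((le_max_right _ _).trans (le_max_right _ _)) hw hw₀ fun y hy => (hL y hy).2.2
  set m := max (α * u a + β * v a + γ * w a) (α * u b + β * v b + γ * w b)
  calc α * u x + β * v x + γ * w x
      ≤ α * (D / d * ((1 - ψ) * u a + ψ * u b)) + β * (D / d * ((1 - ψ) * v a + ψ * v b))
        + γ * (D / d * ((1 - ψ) * w a + ψ * w b)) := by gcongr
    _ = D / d * ((1 - ψ) * (α * u a + β * v a + γ * w a)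
          + ψ * (α * u b + β * v b + γ * w b)) := by ring
    _ ≤ D / d * ((1 - ψ) * m + ψ * m) := by
      gcongr
      exacts [le_max_left _ _, le_max_right _ _]
    _ = D / d * m := by ring

theorem exists_Ioo_disjoint_of_notMem {C : Set ℝ} (hC : IsClosed C) {a₀ x b₀ : ℝ}
    (ha₀ : a₀ < x) (hb₀ : x < b₀) (hx : x ∉ C) :
    ∃ a b, a < x ∧ x < b ∧ (a = a₀ ∨ a ∈ C) ∧ (b = b₀ ∨ b ∈ C) ∧ ∀ y ∈ Ioo a b, y ∉ C := by
  set L := {a₀} ∪ (C ∩ Icc a₀ x)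
  set R := {b₀} ∪ (C ∩ Icc x b₀)
  have hLbdd : BddAbove L := ⟨x, by rintro y (rfl | hy); exacts [ha₀.le, hy.2.2]⟩
  have hRbdd : BddBelow R := ⟨x, by rintro y (rfl | hy); exacts [hb₀.le, hy.2.1]⟩
  have hL : sSup L ∈ L := (isClosed_singleton.union (hC.inter isClosed_Icc)).csSup_mem
    (singleton_nonempty _).inl hLbdd
  have hR : sInf R ∈ R := (isClosed_singleton.union (hC.inter isClosed_Icc)).csInf_mem
    (singleton_nonempty _).inl hRbdd
  have hLx : sSup L < x := by
    rcases hL with h | h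
    · rwa [mem_singleton_iff.1 h]
    · exact h.2.2.lt_of_ne fun h' => hx (h' ▸ h.1)
  have hRx : x < sInf R := by
    rcases hR with h | h
    · rwa [mem_singleton_iff.1 h]
    · exact h.2.1.lt_of_ne' fun h' => hx (h' ▸ h.1)
  refine ⟨sSup L, sInf R, hLx, hRx, hL.imp_right (·.1), hR.imp_right (·.1), ?_⟩
  rintro y ⟨hLy, hyR⟩ hyC
  rcases le_total y x with hyx | hxy
  · have ha₀y : a₀ ≤ y := (le_csSup hLbdd (.inl rfl)).trans hLy.le
    exact hLy.not_ge (le_csSup hLbdd (.inr ⟨hyC, ha₀y, hyx⟩))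
  · have hyb₀ : y ≤ b₀ := hyR.le.trans (csInf_le hRbdd (.inl rfl))
    exact hyR.not_ge (csInf_le hRbdd (.inr ⟨hyC, hxy, hyb₀⟩))

theorem le_mul_of_le_mul_max_on_gaps {P : ℝ → ℝ} {C : Set ℝ} {lBot lTop m R x : ℝ}
    (hC : IsClosed C) (hPC : ∀ y ∈ C, P y ≤ m)
    (hBot : Tendsto P atBot (𝓝 lBot)) (hTop : Tendsto P atTop (𝓝 lTop))
    (hlBot : lBot ≤ m) (hlTop : lTop ≤ m) (hm : 0 ≤ m) (hR : 1 ≤ R)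
    (hgap : ∀ a b, a < x → x < b → (∀ y ∈ Ioo a b, y ∉ C) → P x ≤ R * max (P a) (P b)) :
    P x ≤ R * m := by
  by_cases hxC : x ∈ C
  · exact (hPC x hxC).trans (le_mul_of_one_le_left hm hR)
  have hR₀ : 0 < R := zero_lt_one.trans_le hR
  refine le_of_forall_pos_le_add fun ε hε => ?_
  have hε' : 0 < ε / R := div_pos hε hR₀
  obtain ⟨a₀, hPa₀, ha₀⟩ := ((hBot.eventually (gt_mem_nhds (by linarith : lBot < m + ε / R))).and
    (eventually_lt_atBot x)).exists
  obtain ⟨b₀, hPb₀, hb₀⟩ := ((hTop.eventually (gt_mem_nhds (by linarith : lTop < m + ε / R))).and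
    (eventually_gt_atTop x)).exists
  obtain ⟨a, b, hax, hxb, ha, hb, hab⟩ := exists_Ioo_disjoint_of_notMem hC ha₀ hb₀ hxC
  have hend : ∀ {z z₀}, (z = z₀ ∨ z ∈ C) → P z₀ < m + ε / R → P z ≤ m + ε / R := by
    rintro z z₀ (rfl | hz) hz₀
    exacts [hz₀.le, (hPC z hz).trans (by linarith)]
  calc P x ≤ R * max (P a) (P b) := hgap a b hax hxb hab
    _ ≤ R * (m + ε / R) := by gcongr; exact max_le (hend ha hPa₀) (hend hb hPb₀)
    _ = R * m + ε := by field_simp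

def octant : Set (ℝ × ℝ × ℝ) := {p | 0 ≤ p.1 ∧ 0 ≤ p.2.1 ∧ 0 ≤ p.2.2}

noncomputable def planeLevel (ubar vbar wbar : ℝ) (p : ℝ × ℝ × ℝ) : ℝ :=
  p.1 / ubar + p.2.1 / vbar + p.2.2 / wbar

theorem weighted_sum_le_max_of_planeLevel_le_one {ubar vbar wbar α β γ : ℝ} {p : ℝ × ℝ × ℝ}
    (hub : 0 < ubar) (hvb : 0 < vbar) (hwb : 0 < wbar) (hα : 0 ≤ α) (hp : p ∈ octant)
    (hle : planeLevel ubar vbar wbar p ≤ 1) :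
    α * p.1 + β * p.2.1 + γ * p.2.2 ≤ max (α * ubar) (max (β * vbar) (γ * wbar)) := by
  set m := max (α * ubar) (max (β * vbar) (γ * wbar))
  have term : ∀ {c z zbar : ℝ}, 0 < zbar → 0 ≤ z → c * zbar ≤ m → c * z ≤ m * (z / zbar) :=
    fun {c z zbar} hzbar hz hc => by
      rw [show c * z = c * zbar * (z / zbar) by field_simp]
      exact mul_le_mul_of_nonneg_right hc (div_nonneg hz hzbar.le)
  have h₁ := term hub hp.1 (le_max_left _ _)
  have h₂ := term hvb hp.2.1 ((le_max_left _ _).trans (le_max_right _ _))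
  have h₃ := term hwb hp.2.2 ((le_max_right _ _).trans (le_max_right _ _))
  have hm : 0 ≤ m := (mul_nonneg hα hub.le).trans (le_max_left _ _)
  calc α * p.1 + β * p.2.1 + γ * p.2.2 ≤ m * planeLevel ubar vbar wbar p := by
        unfold planeLevel; linarith
    _ ≤ m := mul_le_of_le_one_right hm hle

theorem neg_of_one_lt_planeLevel {F : ℝ → ℝ → ℝ → ℝ} {ubar vbar wbar M : ℝ}
    (hub : 0 < ubar) (hvb : 0 < vbar) (hwb : 0 < wbar)
    (hF : ContinuousOn (fun p : ℝ × ℝ × ℝ => F p.1 p.2.1 p.2.2) octant)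
    (hzero : ∀ p ∈ octant, F p.1 p.2.1 p.2.2 = 0 → planeLevel ubar vbar wbar p ≤ 1)
    (hlarge : ∀ u v w, M < u → M < v → M < w → F u v w < 0)
    {p : ℝ × ℝ × ℝ} (hp : p ∈ octant) (hlt : 1 < planeLevel ubar vbar wbar p) :
    F p.1 p.2.1 p.2.2 < 0 := by
  set T := max M 0 + 1
  set φ : ℝ → ℝ × ℝ × ℝ := fun t => (p.1 + t, p.2.1 + t, p.2.2 + t)
  have hφ : ∀ t ∈ Icc 0 T, φ t ∈ octant := fun t ht =>
    ⟨by linarith [hp.1, ht.1], by linarith [hp.2.1, ht.1], by linarith [hp.2.2, ht.1]⟩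
  have hne : ∀ t ∈ Icc 0 T, F (φ t).1 (φ t).2.1 (φ t).2.2 ≠ 0 := fun t ht h0 => by
    have hmono : planeLevel ubar vbar wbar p ≤ planeLevel ubar vbar wbar (φ t) := by
      unfold planeLevel; gcongr <;> linarith [ht.1]
    linarith [hzero _ (hφ t ht) h0]
  have hT : F (φ T).1 (φ T).2.1 (φ T).2.2 < 0 := by
    apply hlarge <;> dsimp only [φ, T] <;> linarith [le_max_left M 0, hp.1, hp.2.1, hp.2.2]
  by_contra! h0
  obtain ⟨t, ht, hFt⟩ := intermediate_value_Icc' (by positivity : (0 : ℝ) ≤ T)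
    (hF.comp (by fun_prop : Continuous φ).continuousOn hφ) ⟨hT.le, by simpa [φ] using h0⟩
  exact hne t ht hFt

theorem kinetics_neg_of_one_lt_planeLevel {f g h : ℝ → ℝ → ℝ → ℝ} {ubar vbar wbar : ℝ}
    (hub : 0 < ubar) (hvb : 0 < vbar) (hwb : 0 < wbar)
    (hfc : ContinuousOn (fun p : ℝ × ℝ × ℝ => f p.1 p.2.1 p.2.2) octant)
    (hgc : ContinuousOn (fun p : ℝ × ℝ × ℝ => g p.1 p.2.1 p.2.2) octant)
    (hhc : ContinuousOn (fun p : ℝ × ℝ × ℝ => h p.1 p.2.1 p.2.2) octant)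
    (hzf : ∀ p ∈ octant, f p.1 p.2.1 p.2.2 = 0 → planeLevel ubar vbar wbar p ≤ 1)
    (hzg : ∀ p ∈ octant, g p.1 p.2.1 p.2.2 = 0 → planeLevel ubar vbar wbar p ≤ 1)
    (hzh : ∀ p ∈ octant, h p.1 p.2.1 p.2.2 = 0 → planeLevel ubar vbar wbar p ≤ 1)
    (hlarge : ∃ M > 0, ∀ u v w : ℝ, M < u → M < v → M < w →
      f u v w < 0 ∧ g u v w < 0 ∧ h u v w < 0)
    {p : ℝ × ℝ × ℝ} (hp : p ∈ octant) (hlt : 1 < planeLevel ubar vbar wbar p) :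
    f p.1 p.2.1 p.2.2 < 0 ∧ g p.1 p.2.1 p.2.2 < 0 ∧ h p.1 p.2.1 p.2.2 < 0 := by
  obtain ⟨M, -, hM⟩ := hlarge
  exact ⟨neg_of_one_lt_planeLevel hub hvb hwb hfc hzf (fun u v w h₁ h₂ h₃ => (hM u v w h₁ h₂ h₃).1)
      hp hlt,
    neg_of_one_lt_planeLevel hub hvb hwb hgc hzg (fun u v w h₁ h₂ h₃ => (hM u v w h₁ h₂ h₃).2.1)
      hp hlt,
    neg_of_one_lt_planeLevel hub hvb hwb hhc hzh (fun u v w h₁ h₂ h₃ => (hM u v w h₁ h₂ h₃).2.2)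
      hp hlt⟩

def IsKineticEquilibrium (f g h : ℝ → ℝ → ℝ → ℝ) (e : ℝ × ℝ × ℝ) : Prop :=
  e = (0, 0, 0) ∨
    (∃ u₁ : ℝ, 0 < u₁ ∧ f u₁ 0 0 = 0 ∧ e = (u₁, 0, 0)) ∨
    (∃ v₂ : ℝ, 0 < v₂ ∧ g 0 v₂ 0 = 0 ∧ e = (0, v₂, 0)) ∨
    (∃ w₃ : ℝ, 0 < w₃ ∧ h 0 0 w₃ = 0 ∧ e = (0, 0, w₃)) ∨
    (∃ us vs ws : ℝ, 0 < us ∧ 0 < vs ∧ 0 < ws ∧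
      f us vs ws = 0 ∧ g us vs ws = 0 ∧ h us vs ws = 0 ∧ e = (us, vs, ws))

theorem IsKineticEquilibrium.planeLevel_le_one {f g h : ℝ → ℝ → ℝ → ℝ} {e : ℝ × ℝ × ℝ}
    {ubar vbar wbar : ℝ} (he : IsKineticEquilibrium f g h e)
    (hf : ∀ p ∈ octant, f p.1 p.2.1 p.2.2 = 0 → planeLevel ubar vbar wbar p ≤ 1)
    (hg : ∀ p ∈ octant, g p.1 p.2.1 p.2.2 = 0 → planeLevel ubar vbar wbar p ≤ 1)
    (hh : ∀ p ∈ octant, h p.1 p.2.1 p.2.2 = 0 → planeLevel ubar vbar wbar p ≤ 1) :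
    e ∈ octant ∧ planeLevel ubar vbar wbar e ≤ 1 := by
  rcases he with rfl | ⟨u₁, hu₁, h₀, rfl⟩ | ⟨v₂, hv₂, h₀, rfl⟩ | ⟨w₃, hw₃, h₀, rfl⟩ |
    ⟨us, vs, ws, hus, hvs, hws, h₀, -, -, rfl⟩
  · simp [octant, planeLevel]
  · exact ⟨⟨hu₁.le, le_rfl, le_rfl⟩, hf _ ⟨hu₁.le, le_rfl, le_rfl⟩ h₀⟩
  · exact ⟨⟨le_rfl, hv₂.le, le_rfl⟩, hg _ ⟨le_rfl, hv₂.le, le_rfl⟩ h₀⟩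
  · exact ⟨⟨le_rfl, le_rfl, hw₃.le⟩, hh _ ⟨le_rfl, le_rfl, hw₃.le⟩ h₀⟩
  · exact ⟨⟨hus.le, hvs.le, hws.le⟩, hf _ ⟨hus.le, hvs.le, hws.le⟩ h₀⟩

theorem NBMP_three_equations_upper_bound_general
    (d₁ d₂ d₃ θ : ℝ) (hd₁ : 0 < d₁) (hd₂ : 0 < d₂) (hd₃ : 0 < d₃)
    (ubar ulow vbar vlow wbar wlow : ℝ)
    (hulow : 0 < ulow) (huu : ulow < ubar)
    (hvlow : 0 < vlow) (hvv : vlow < vbar)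
    (hwlow : 0 < wlow) (hww : wlow < wbar)
    (PH : Set (ℝ × ℝ × ℝ))
    (hPH : PH = {p : ℝ × ℝ × ℝ | 0 ≤ p.1 ∧ 0 ≤ p.2.1 ∧ 0 ≤ p.2.2 ∧
      1 ≤ p.1 / ulow + p.2.1 / vlow + p.2.2 / wlow ∧
      p.1 / ubar + p.2.1 / vbar + p.2.2 / wbar ≤ 1})
    (f g h : ℝ → ℝ → ℝ → ℝ)
    (hfc : ContinuousOn (fun p : ℝ × ℝ × ℝ => f p.1 p.2.1 p.2.2)
      {p | 0 ≤ p.1 ∧ 0 ≤ p.2.1 ∧ 0 ≤ p.2.2})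
    (hgc : ContinuousOn (fun p : ℝ × ℝ × ℝ => g p.1 p.2.1 p.2.2)
      {p | 0 ≤ p.1 ∧ 0 ≤ p.2.1 ∧ 0 ≤ p.2.2})
    (hhc : ContinuousOn (fun p : ℝ × ℝ × ℝ => h p.1 p.2.1 p.2.2)
      {p | 0 ≤ p.1 ∧ 0 ≤ p.2.1 ∧ 0 ≤ p.2.2})
    (hSf : {p : ℝ × ℝ × ℝ | 0 ≤ p.1 ∧ 0 ≤ p.2.1 ∧ 0 ≤ p.2.2 ∧ f p.1 p.2.1 p.2.2 = 0} ⊆ PH)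
    (hSg : {p : ℝ × ℝ × ℝ | 0 ≤ p.1 ∧ 0 ≤ p.2.1 ∧ 0 ≤ p.2.2 ∧ g p.1 p.2.1 p.2.2 = 0} ⊆ PH)
    (hSh : {p : ℝ × ℝ × ℝ | 0 ≤ p.1 ∧ 0 ≤ p.2.1 ∧ 0 ≤ p.2.2 ∧ h p.1 p.2.1 p.2.2 = 0} ⊆ PH)
    (hlarge : ∃ M > 0, ∀ u v w : ℝ, M < u → M < v → M < w →
      f u v w < 0 ∧ g u v w < 0 ∧ h u v w < 0)
    (u v w : ℝ → ℝ)
    (hu : ContDiff ℝ 2 u) (hv : ContDiff ℝ 2 v) (hw : ContDiff ℝ 2 w)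
    (hupos : ∀ x, 0 < u x) (hvpos : ∀ x, 0 < v x) (hwpos : ∀ x, 0 < w x)
    (hueq : ∀ x, d₁ * deriv (deriv u) x + θ * deriv u x
      + u x * f (u x) (v x) (w x) = 0)
    (hveq : ∀ x, d₂ * deriv (deriv v) x + θ * deriv v x
      + v x * g (u x) (v x) (w x) = 0)
    (hweq : ∀ x, d₃ * deriv (deriv w) x + θ * deriv w x
      + w x * h (u x) (v x) (w x) = 0)
    (eminus eplus : ℝ × ℝ × ℝ)
    (hlimminus : Tendsto (fun x => (u x, v x, w x)) atBot (nhds eminus))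
    (hlimplus : Tendsto (fun x => (u x, v x, w x)) atTop (nhds eplus))
    (heminus : eminus = (0, 0, 0) ∨
      (∃ u₁ : ℝ, 0 < u₁ ∧ f u₁ 0 0 = 0 ∧ eminus = (u₁, 0, 0)) ∨
      (∃ v₂ : ℝ, 0 < v₂ ∧ g 0 v₂ 0 = 0 ∧ eminus = (0, v₂, 0)) ∨
      (∃ w₃ : ℝ, 0 < w₃ ∧ h 0 0 w₃ = 0 ∧ eminus = (0, 0, w₃)) ∨
      (∃ us vs ws : ℝ, 0 < us ∧ 0 < vs ∧ 0 < ws ∧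
        f us vs ws = 0 ∧ g us vs ws = 0 ∧ h us vs ws = 0 ∧ eminus = (us, vs, ws)))
    (heplus : eplus = (0, 0, 0) ∨
      (∃ u₁ : ℝ, 0 < u₁ ∧ f u₁ 0 0 = 0 ∧ eplus = (u₁, 0, 0)) ∨
      (∃ v₂ : ℝ, 0 < v₂ ∧ g 0 v₂ 0 = 0 ∧ eplus = (0, v₂, 0)) ∨
      (∃ w₃ : ℝ, 0 < w₃ ∧ h 0 0 w₃ = 0 ∧ eplus = (0, 0, w₃)) ∨
      (∃ us vs ws : ℝ, 0 < us ∧ 0 < vs ∧ 0 < ws ∧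
        f us vs ws = 0 ∧ g us vs ws = 0 ∧ h us vs ws = 0 ∧ eplus = (us, vs, ws)))
    (α β γ : ℝ) (hα : 0 < α) (hβ : 0 < β) (hγ : 0 < γ) (x : ℝ) :
    α * u x + β * v x + γ * w x ≤
      max (α * ubar) (max (β * vbar) (γ * wbar)) *
        (max d₁ (max d₂ d₃) / min d₁ (min d₂ d₃)) := by
  have hub : 0 < ubar := hulow.trans huu
  have hvb : 0 < vbar := hvlow.trans hvv
  have hwb : 0 < wbar := hwlow.trans hww
  have hzero : ∀ F : ℝ → ℝ → ℝ → ℝ,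
      {p : ℝ × ℝ × ℝ | 0 ≤ p.1 ∧ 0 ≤ p.2.1 ∧ 0 ≤ p.2.2 ∧ F p.1 p.2.1 p.2.2 = 0} ⊆ PH →
      ∀ p ∈ octant, F p.1 p.2.1 p.2.2 = 0 → planeLevel ubar vbar wbar p ≤ 1 :=
    fun F hF p hp h₀ => (hPH ▸ hF ⟨hp.1, hp.2.1, hp.2.2, h₀⟩ :).2.2.2.2
  have hoct : ∀ y, (u y, v y, w y) ∈ octant :=
    fun y => ⟨(hupos y).le, (hvpos y).le, (hwpos y).le⟩
  have hsub : ∀ y, 1 < planeLevel ubar vbar wbar (u y, v y, w y) →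
      0 < d₁ * deriv (deriv u) y + θ * deriv u y ∧ 0 < d₂ * deriv (deriv v) y + θ * deriv v y ∧
        0 < d₃ * deriv (deriv w) y + θ * deriv w y := fun y hy => by
    obtain ⟨hf, hg, hh⟩ := kinetics_neg_of_one_lt_planeLevel hub hvb hwb hfc hgc hhc
      (hzero f hSf) (hzero g hSg) (hzero h hSh) hlarge (hoct y) hy
    exact ⟨by nlinarith [hueq y, hupos y], by nlinarith [hveq y, hvpos y],
      by nlinarith [hweq y, hwpos y]⟩
  have hbelow : ∀ p ∈ octant, planeLevel ubar vbar wbar p ≤ 1 →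
      α * p.1 + β * p.2.1 + γ * p.2.2 ≤ max (α * ubar) (max (β * vbar) (γ * wbar)) :=
    fun p hp hle => weighted_sum_le_max_of_planeLevel_le_one hub hvb hwb hα.le hp hle
  have hends : ∀ e, IsKineticEquilibrium f g h e →
      α * e.1 + β * e.2.1 + γ * e.2.2 ≤ max (α * ubar) (max (β * vbar) (γ * wbar)) :=
    fun e he => (he.planeLevel_le_one (hzero f hSf) (hzero g hSg) (hzero h hSh)).elim (hbelow e)
  have hP : Continuous fun p : ℝ × ℝ × ℝ => α * p.1 + β * p.2.1 + γ * p.2.2 := by fun_prop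
  have hlevel : Continuous fun y => planeLevel ubar vbar wbar (u y, v y, w y) :=
    ((hu.continuous.div_const _).add (hv.continuous.div_const _)).add (hw.continuous.div_const _)
  rw [mul_comm (max (α * ubar) _)]
  refine le_mul_of_le_mul_max_on_gaps (P := fun y => α * u y + β * v y + γ * w y)
    (isClosed_le hlevel continuous_const) (fun y hy => hbelow _ (hoct y) hy)
    ((hP.tendsto _).comp hlimminus) ((hP.tendsto _).comp hlimplus) (hends _ heminus)
    (hends _ heplus) ((mul_nonneg hα.le hub.le).trans (le_max_left _ _)) ?_
    fun a b hax hxb hgap => ?_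
  · exact (one_le_div (lt_min hd₁ (lt_min hd₂ hd₃))).2
      ((min_le_left _ _).trans (le_max_left _ _))
  · exact weighted_sum_le_of_subsolutions hd₁ hd₂ hd₃ hα.le hβ.le hγ.le hu hv hw
      (fun y => (hupos y).le) (fun y => (hvpos y).le) (fun y => (hwpos y).le) (hax.trans hxb)
      ⟨hax.le, hxb.le⟩ fun y hy => hsub y (not_le.1 (hgap y hy))

/-- N-barrier maximum principle for systems of three equations,
upper bound. -/
theorem NBMP_three_equations_upper_bound
    (d₁ d₂ d₃ θ : ℝ) (hd₁ : 0 < d₁) (hd₂ : 0 < d₂) (hd₃ : 0 < d₃)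
    (ubar ulow vbar vlow wbar wlow : ℝ)
    (hulow : 0 < ulow) (huu : ulow < ubar)
    (hvlow : 0 < vlow) (hvv : vlow < vbar)
    (hwlow : 0 < wlow) (hww : wlow < wbar)
    (PH : Set (ℝ × ℝ × ℝ))
    (hPH : PH = {p : ℝ × ℝ × ℝ | 0 ≤ p.1 ∧ 0 ≤ p.2.1 ∧ 0 ≤ p.2.2 ∧
      1 ≤ p.1 / ulow + p.2.1 / vlow + p.2.2 / wlow ∧
      p.1 / ubar + p.2.1 / vbar + p.2.2 / wbar ≤ 1})
    (f g h : ℝ → ℝ → ℝ → ℝ)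
    (hfc : ContinuousOn (fun p : ℝ × ℝ × ℝ => f p.1 p.2.1 p.2.2)
      {p | 0 ≤ p.1 ∧ 0 ≤ p.2.1 ∧ 0 ≤ p.2.2})
    (hgc : ContinuousOn (fun p : ℝ × ℝ × ℝ => g p.1 p.2.1 p.2.2)
      {p | 0 ≤ p.1 ∧ 0 ≤ p.2.1 ∧ 0 ≤ p.2.2})
    (hhc : ContinuousOn (fun p : ℝ × ℝ × ℝ => h p.1 p.2.1 p.2.2)
      {p | 0 ≤ p.1 ∧ 0 ≤ p.2.1 ∧ 0 ≤ p.2.2})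
    (hSf : {p : ℝ × ℝ × ℝ | 0 ≤ p.1 ∧ 0 ≤ p.2.1 ∧ 0 ≤ p.2.2 ∧ f p.1 p.2.1 p.2.2 = 0} ⊆ PH)
    (hSg : {p : ℝ × ℝ × ℝ | 0 ≤ p.1 ∧ 0 ≤ p.2.1 ∧ 0 ≤ p.2.2 ∧ g p.1 p.2.1 p.2.2 = 0} ⊆ PH)
    (hSh : {p : ℝ × ℝ × ℝ | 0 ≤ p.1 ∧ 0 ≤ p.2.1 ∧ 0 ≤ p.2.2 ∧ h p.1 p.2.1 p.2.2 = 0} ⊆ PH)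
    (hsmall : ∃ δ > 0, ∀ u v w : ℝ, 0 < u → u < δ → 0 < v → v < δ → 0 < w → w < δ →
      0 < f u v w ∧ 0 < g u v w ∧ 0 < h u v w)
    (hlarge : ∃ M > 0, ∀ u v w : ℝ, M < u → M < v → M < w →
      f u v w < 0 ∧ g u v w < 0 ∧ h u v w < 0)
    (u v w : ℝ → ℝ)
    (hu : ContDiff ℝ 2 u) (hv : ContDiff ℝ 2 v) (hw : ContDiff ℝ 2 w)
    (hupos : ∀ x, 0 < u x) (hvpos : ∀ x, 0 < v x) (hwpos : ∀ x, 0 < w x)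
    (hueq : ∀ x, d₁ * deriv (deriv u) x + θ * deriv u x
      + u x * f (u x) (v x) (w x) = 0)
    (hveq : ∀ x, d₂ * deriv (deriv v) x + θ * deriv v x
      + v x * g (u x) (v x) (w x) = 0)
    (hweq : ∀ x, d₃ * deriv (deriv w) x + θ * deriv w x
      + w x * h (u x) (v x) (w x) = 0)
    (eminus eplus : ℝ × ℝ × ℝ)
    (hlimminus : Tendsto (fun x => (u x, v x, w x)) atBot (nhds eminus))
    (hlimplus : Tendsto (fun x => (u x, v x, w x)) atTop (nhds eplus))
    (heminus : eminus = (0, 0, 0) ∨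
      (∃ u₁ : ℝ, 0 < u₁ ∧ f u₁ 0 0 = 0 ∧ eminus = (u₁, 0, 0)) ∨
      (∃ v₂ : ℝ, 0 < v₂ ∧ g 0 v₂ 0 = 0 ∧ eminus = (0, v₂, 0)) ∨
      (∃ w₃ : ℝ, 0 < w₃ ∧ h 0 0 w₃ = 0 ∧ eminus = (0, 0, w₃)) ∨
      (∃ us vs ws : ℝ, 0 < us ∧ 0 < vs ∧ 0 < ws ∧
        f us vs ws = 0 ∧ g us vs ws = 0 ∧ h us vs ws = 0 ∧ eminus = (us, vs, ws)))
    (heplus : eplus = (0, 0, 0) ∨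
      (∃ u₁ : ℝ, 0 < u₁ ∧ f u₁ 0 0 = 0 ∧ eplus = (u₁, 0, 0)) ∨
      (∃ v₂ : ℝ, 0 < v₂ ∧ g 0 v₂ 0 = 0 ∧ eplus = (0, v₂, 0)) ∨
      (∃ w₃ : ℝ, 0 < w₃ ∧ h 0 0 w₃ = 0 ∧ eplus = (0, 0, w₃)) ∨
      (∃ us vs ws : ℝ, 0 < us ∧ 0 < vs ∧ 0 < ws ∧
        f us vs ws = 0 ∧ g us vs ws = 0 ∧ h us vs ws = 0 ∧ eplus = (us, vs, ws)))
    (α β γ : ℝ) (hα : 0 < α) (hβ : 0 < β) (hγ : 0 < γ) (x : ℝ) :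
    α * u x + β * v x + γ * w x ≤
      max (α * ubar) (max (β * vbar) (γ * wbar)) *
        (max d₁ (max d₂ d₃) / min d₁ (min d₂ d₃)) :=
  NBMP_three_equations_upper_bound_general d₁ d₂ d₃ θ hd₁ hd₂ hd₃ ubar ulow vbar vlow wbar wlow
    hulow huu hvlow hvv hwlow hww PH hPH f g h hfc hgc hhc hSf hSg hSh hlarge u v w hu hv hw hupos
    hvpos hwpos hueq hveq hweq eminus eplus hlimminus hlimplus heminus heplus α β γ hα hβ hγ x
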